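/- arXiv:1106.3737 — 6 statements merged into one kernel-verified Lean document; each statement's English description precedes it below -/
import Mathlib

section
/- Let X be a set, g : X → X a map, and c_n : X → ℝ (n ≥ 0) a sequence of functions with c_0 ≡ 0 satisfying c_{n+k}(x) ≤ c_n(g^k(x)) + c_k(x) for every x ∈ X and all n, k ≥ 0. Suppose there is a constant L ≥ 0 with c_n(x) ≤ L for every x ∈ X and every n ≥ 0, and suppose A ⊆ X and κ > 0 satisfy c_1(x) ≤ −L − κ for every x ∈ A. Then for every x ∈ A such that the visit frequency θ := lim_{n→∞} (1/n) · #{0 ≤ j < n : g^j(x) ∈ A} exists and is strictly positive, one has liminf_{n→∞} (1/n) c_n(x) ≤ −κθ < 0. -/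
/-!
At each visit to `A`, subadditivity at the visit time contributes `c 1 ≤ -L - κ`, while the
stretch of orbit since the previous visit contributes at most `L`; hence, right after a visit,
`c m x ≤ -κ · #visits`. One more stretch gives `c n x ≤ L - κ · #visits` for every `n`, and
dividing by `n` the liminf is at most `-κθ`.
-/

open Filter Set Topology

section Cocycle

variable {X : Type*} {g : X → X} {c : ℕ → X → ℝ} {L : ℝ}

lemma cocycle_le_add_of_le
    (hsub : ∀ (x : X) (n k : ℕ), c (n + k) x ≤ c n (g^[k] x) + c k x)
    (hbound : ∀ (x : X) (n : ℕ), c n x ≤ L) (x : X) {m n : ℕ} (hmn : m ≤ n) :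
    c n x ≤ L + c m x := by
  have h := hsub x (n - m) m
  rw [Nat.sub_add_cancel hmn] at h
  linarith [hbound (g^[m] x) (n - m)]

lemma exists_le_cocycle_le_neg_mul_visits {A : Set X} {κ : ℝ}
    (hc0 : ∀ x : X, c 0 x = 0)
    (hsub : ∀ (x : X) (n k : ℕ), c (n + k) x ≤ c n (g^[k] x) + c k x)
    (hbound : ∀ (x : X) (n : ℕ), c n x ≤ L) (hA : ∀ x ∈ A, c 1 x ≤ -L - κ) (x : X) (n : ℕ) :
    ∃ m ≤ n, c m x ≤ -κ * ∑ j ∈ Finset.range n, A.indicator (fun _ => (1 : ℝ)) (g^[j] x) := by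
  induction n with
  | zero => exact ⟨0, le_rfl, by simp [hc0]⟩
  | succ n ih =>
    obtain ⟨m, hmn, hm⟩ := ih
    rw [Finset.sum_range_succ]
    by_cases hvisit : g^[n] x ∈ A
    · refine ⟨n + 1, le_rfl, ?_⟩
      have hstep : c (1 + n) x ≤ c 1 (g^[n] x) + c n x := hsub x 1 n
      rw [Nat.add_comm] at hstep
      have hblock := cocycle_le_add_of_le hsub hbound x hmn
      rw [indicator_of_mem hvisit]
      linarith [hA _ hvisit]
    · exact ⟨m, hmn.trans n.le_succ, by rwa [indicator_of_notMem hvisit, add_zero]⟩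

lemma cocycle_le_sub_mul_visits {A : Set X} {κ : ℝ}
    (hc0 : ∀ x : X, c 0 x = 0)
    (hsub : ∀ (x : X) (n k : ℕ), c (n + k) x ≤ c n (g^[k] x) + c k x)
    (hbound : ∀ (x : X) (n : ℕ), c n x ≤ L) (hA : ∀ x ∈ A, c 1 x ≤ -L - κ) (x : X) (n : ℕ) :
    c n x ≤ L - κ * ∑ j ∈ Finset.range n, A.indicator (fun _ => (1 : ℝ)) (g^[j] x) := by
  obtain ⟨m, hmn, hm⟩ := exists_le_cocycle_le_neg_mul_visits hc0 hsub hbound hA x n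
  linarith [cocycle_le_add_of_le hsub hbound x hmn]

end Cocycle

lemma liminf_coe_div_le_of_le_sub_mul {f s : ℕ → ℝ} {L κ θ : ℝ}
    (hf : ∀ n, f n ≤ L - κ * s n)
    (hs : Tendsto (fun n : ℕ => 1 / (n : ℝ) * s n) atTop (𝓝 θ)) :
    liminf (fun n : ℕ => ((1 / (n : ℝ) * f n : ℝ) : EReal)) atTop ≤ ((-κ * θ : ℝ) : EReal) := by
  have hlim : Tendsto (fun n : ℕ => L * (1 / (n : ℝ)) - κ * (1 / (n : ℝ) * s n)) atTop
      (𝓝 (-κ * θ)) := by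
    simpa [neg_mul] using (tendsto_one_div_atTop_nhds_zero_nat.const_mul L).sub (hs.const_mul κ)
  have hle : ∀ᶠ n : ℕ in atTop, ((1 / (n : ℝ) * f n : ℝ) : EReal) ≤
      ((L * (1 / (n : ℝ)) - κ * (1 / (n : ℝ) * s n) : ℝ) : EReal) := by
    refine Eventually.of_forall fun n => EReal.coe_le_coe_iff.mpr ?_
    calc 1 / (n : ℝ) * f n ≤ 1 / (n : ℝ) * (L - κ * s n) :=
          mul_le_mul_of_nonneg_left (hf n) (by positivity)
      _ = L * (1 / (n : ℝ)) - κ * (1 / (n : ℝ) * s n) := by ring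
  exact (liminf_le_liminf hle).trans_eq (EReal.tendsto_coe.mpr hlim).liminf_eq

theorem stmt5_general {X : Type*} (g : X → X) (c : ℕ → X → ℝ)
    (hc0 : ∀ x : X, c 0 x = 0)
    (hsub : ∀ (x : X) (n k : ℕ), c (n + k) x ≤ c n (g^[k] x) + c k x)
    (L : ℝ) (hbound : ∀ (x : X) (n : ℕ), c n x ≤ L)
    (A : Set X) (κ : ℝ) (hκ : 0 < κ)
    (hA : ∀ x ∈ A, c 1 x ≤ -L - κ) :
    ∀ x ∈ A, ∀ θ : ℝ, 0 < θ →
      Tendsto (fun n : ℕ => (1 / (n : ℝ)) *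
          ∑ j ∈ Finset.range n, A.indicator (fun _ => (1 : ℝ)) (g^[j] x)) atTop (nhds θ) →
      liminf (fun n : ℕ => ((1 / (n : ℝ) * c n x : ℝ) : EReal)) atTop ≤ ((-κ * θ : ℝ) : EReal)
        ∧ -κ * θ < 0 := by
  intro x _ θ hθ hfreq
  exact ⟨liminf_coe_div_le_of_le_sub_mul (cocycle_le_sub_mul_visits hc0 hsub hbound hA x) hfreq,
    by rw [neg_mul]; exact neg_neg_of_pos (mul_pos hκ hθ)⟩

/-- abstract return-time estimate.  For a bounded subadditive cocycle `c` over a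
map `g` with `c 1 ≤ -L - κ` on a set `A`, every point of `A` whose visit frequency `θ` to `A`
exists and is positive satisfies `liminf (1/n) c_n ≤ -κθ < 0`. -/
theorem stmt5 {X : Type*} (g : X → X) (c : ℕ → X → ℝ)
    (hc0 : ∀ x : X, c 0 x = 0)
    (hsub : ∀ (x : X) (n k : ℕ), c (n + k) x ≤ c n (g^[k] x) + c k x)
    (L : ℝ) (hL : 0 ≤ L) (hbound : ∀ (x : X) (n : ℕ), c n x ≤ L)
    (A : Set X) (κ : ℝ) (hκ : 0 < κ)
    (hA : ∀ x ∈ A, c 1 x ≤ -L - κ) :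
    ∀ x ∈ A, ∀ θ : ℝ, 0 < θ →
      Tendsto (fun n : ℕ => (1 / (n : ℝ)) *
          ∑ j ∈ Finset.range n, A.indicator (fun _ => (1 : ℝ)) (g^[j] x)) atTop (nhds θ) →
      liminf (fun n : ℕ => ((1 / (n : ℝ) * c n x : ℝ) : EReal)) atTop ≤ ((-κ * θ : ℝ) : EReal)
        ∧ -κ * θ < 0 :=
  stmt5_general g c hc0 hsub L hbound A κ hκ hA
end

section
/- Let f be a minimal homeomorphism of a compact metric space X. Let a_n : X → ℝ (n ≥ 0) be continuous functions with a_0 ≡ 0 satisfying a_{n+k}(x) ≤ a_n(f^k(x)) + a_k(x) for every x ∈ X and all n, k ≥ 0, and suppose there are continuous functions b_n : X → ℝ (n ≥ 0) with a_n(x) ≤ a_{n+k}(x) + b_k(f^n(x)) for every x ∈ X and all n, k ≥ 0. Fix an integer S ≥ 1 and a real λ > 0, and suppose: (i) a_{kS}(x) ≤ log λ for every x ∈ X and every k ≥ 1; (ii) there exists x₀ ∈ X with a_S(x₀) < −log λ. Then there exist an integer N ≥ 1 and a real τ ∈ (0,1) such that a_N(x) ≤ log τ for every x ∈ X. -/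
/-!
If `λ < 1`, take `N = S`. Otherwise, on the nonempty open set `U = {a_S < -log λ - ε}` every
block `a_{qS}` with `q ≥ 1` is at most `-ε`, because `a_{qS} ≤ a_{(q-1)S} ∘ f^S + a_S` and
`a_{(q-1)S} ≤ log λ`. Minimality and compactness give a uniform return time `T` to `U`, and the
functions `b` turn (i) into a uniform upper bound `G` for all the `a_n`. Along any orbit pick one
visit to `U` in each window `[jT, (j+1)T)`, `j ≤ mS`: by pigeonhole `m + 1` of them share a
residue mod `S`, so subadditivity along these visits gives `a_{(mS+1)T} ≤ 2G - mε`, which is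
below `-1` for large `m`.
-/

open Set

namespace Homeomorph
variable {X : Type*} [TopologicalSpace X]

theorem coe_pow (f : X ≃ₜ X) (n : ℕ) : ⇑(f ^ n) = (⇑f)^[n] := by
  induction n with
  | zero => rfl
  | succ n ih => rw [pow_succ, Function.iterate_succ, ← ih]; rfl

theorem iUnion_zpow_preimage_eq_univ (f : X ≃ₜ X)
    (hmin : ∀ C : Set X, IsClosed C → C.Nonempty → ⇑f '' C = C → C = univ)
    {U : Set X} (hU : IsOpen U) (hne : U.Nonempty) : ⋃ n : ℤ, ⇑(f ^ n) ⁻¹' U = univ := by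
  set V := ⋃ n : ℤ, ⇑(f ^ n) ⁻¹' U
  have hV : ∀ x, f x ∈ V ↔ x ∈ V := fun x => by
    simp only [V, mem_iUnion, mem_preimage, ← mul_apply, ← zpow_add_one]
    exact ⟨fun ⟨n, hn⟩ => ⟨n + 1, hn⟩, fun ⟨n, hn⟩ => ⟨n - 1, by rwa [sub_add_cancel]⟩⟩
  by_contra hVne
  have hinv : ⇑f '' Vᶜ = Vᶜ := by
    ext y
    rw [f.image_eq_preimage_symm, mem_preimage, mem_compl_iff, mem_compl_iff, ← hV, apply_symm_apply]
  obtain ⟨x, hx⟩ := hne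
  have hxV : x ∈ V := mem_iUnion.2 ⟨0, hx⟩
  have := hmin Vᶜ (isOpen_iUnion fun n => hU.preimage (f ^ n).continuous).isClosed_compl
    (nonempty_compl.2 hVne) hinv
  exact (this ▸ mem_univ x : x ∈ Vᶜ) hxV

theorem exists_forall_exists_lt_iterate_mem [CompactSpace X] (f : X ≃ₜ X)
    (hmin : ∀ C : Set X, IsClosed C → C.Nonempty → ⇑f '' C = C → C = univ)
    {U : Set X} (hU : IsOpen U) (hne : U.Nonempty) : ∃ T, ∀ x, ∃ t < T, (⇑f)^[t] x ∈ U := by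
  obtain ⟨I, hI⟩ := isCompact_univ.elim_finite_subcover (fun n : ℤ => ⇑(f ^ n) ⁻¹' U)
    (fun n => hU.preimage (f ^ n).continuous) (iUnion_zpow_preimage_eq_univ f hmin hU hne).ge
  set M := I.sup Int.natAbs
  -- the cover uses times in `[-M, M]`; looking at `f^M x` shifts them into `[0, 2M]`
  refine ⟨2 * M + 1, fun x => ?_⟩
  obtain ⟨n, hnI, hn⟩ := mem_iUnion₂.1 (hI (mem_univ ((f ^ M) x)))
  have hnM : n.natAbs ≤ M := Finset.le_sup (f := Int.natAbs) hnI
  obtain ⟨t, ht⟩ : ∃ t : ℕ, (t : ℤ) = n + M := ⟨(n + M).toNat, Int.toNat_of_nonneg (by omega)⟩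
  refine ⟨t, by omega, ?_⟩
  rwa [mem_preimage, ← mul_apply, ← zpow_natCast, ← zpow_add, ← ht, zpow_natCast, coe_pow] at hn

end Homeomorph

theorem exists_strictMono_fin_modEq (g : ℕ → ℕ) {S : ℕ} (hS : 0 < S) (m : ℕ) :
    ∃ e : Fin (m + 1) → ℕ, StrictMono e ∧ (∀ i, e i < m * S + 1) ∧
      ∀ i j, g (e i) ≡ g (e j) [MOD S] := by
  have hmaps : ∀ j ∈ Finset.range (m * S + 1), g j % S ∈ Finset.range S :=
    fun j _ => Finset.mem_range.2 (Nat.mod_lt _ hS)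
  obtain ⟨r, -, hr⟩ := Finset.exists_lt_card_fiber_of_mul_lt_card_of_maps_to (n := m) hmaps
    (by simp only [Finset.card_range]; lia)
  set F := (Finset.range (m * S + 1)).filter (fun j => g j % S = r)
  have hmem : ∀ i, F.orderEmbOfCardLe hr i ∈ F := F.orderEmbOfCardLe_mem hr
  refine ⟨F.orderEmbOfCardLe hr, (F.orderEmbOfCardLe hr).strictMono,
    fun i => Finset.mem_range.1 (Finset.mem_filter.1 (hmem i)).1, fun i j => ?_⟩
  exact (Finset.mem_filter.1 (hmem i)).2.trans (Finset.mem_filter.1 (hmem j)).2.symm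

section
variable {X : Type*}

theorem exists_strictMono_iterate_mem (f : X → X) {U : Set X} {T : ℕ}
    (hT : ∀ x, ∃ t < T, f^[t] x ∈ U) (x : X) :
    ∃ g : ℕ → ℕ, StrictMono g ∧ ∀ j, g j < (j + 1) * T ∧ f^[g j] x ∈ U := by
  choose t ht using fun j => hT (f^[j * T] x)
  have hlt : ∀ j, t j + j * T < (j + 1) * T := fun j => by
    rw [add_one_mul, add_comm _ T]; exact Nat.add_lt_add_right (ht j).1 _
  refine ⟨fun j => t j + j * T, strictMono_nat_of_lt_succ fun j => ?_, fun j => ?_⟩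
  · exact (hlt j).trans_le (Nat.le_add_left _ _)
  · exact ⟨hlt j, by rw [Function.iterate_add_apply]; exact (ht j).2⟩

structure IsSubadditiveCocycle (f : X → X) (a : ℕ → X → ℝ) : Prop where
  apply_zero : ∀ x, a 0 x = 0
  apply_add_le : ∀ x n k, a (n + k) x ≤ a n (f^[k] x) + a k x

namespace IsSubadditiveCocycle
variable {f : X → X} {a : ℕ → X → ℝ}

theorem apply_sub_le (ha : IsSubadditiveCocycle f a) (x : X) {s t u : ℕ} (hst : s ≤ t)
    (htu : t ≤ u) : a (u - s) (f^[s] x) ≤ a (u - t) (f^[t] x) + a (t - s) (f^[s] x) := by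
  have h := ha.apply_add_le (f^[s] x) (u - t) (t - s)
  rwa [← Function.iterate_add_apply, Nat.sub_add_cancel hst, Nat.sub_add_sub_cancel htu hst] at h

theorem apply_sub_le_sum (ha : IsSubadditiveCocycle f a) (x : X) :
    ∀ {m : ℕ} (u : Fin (m + 1) → ℕ), Monotone u →
      a (u (Fin.last m) - u 0) (f^[u 0] x) ≤
        ∑ i : Fin m, a (u i.succ - u i.castSucc) (f^[u i.castSucc] x)
  | 0, u, _ => by simp [ha.apply_zero]
  | m + 1, u, hu => by
    have ih := apply_sub_le_sum ha x (u ∘ Fin.castSucc) (hu.comp Fin.strictMono_castSucc.monotone)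
    simp only [Function.comp_apply, Fin.castSucc_zero] at ih
    rw [Fin.sum_univ_castSucc]
    simp only [Fin.succ_castSucc]
    exact (ha.apply_sub_le x (hu (Fin.zero_le _)) (hu (Fin.castSucc_le_succ (Fin.last m)))).trans
      ((add_comm _ _).le.trans (add_le_add_left ih _))

theorem apply_le_neg_of_dvd (ha : IsSubadditiveCocycle f a) {S : ℕ} {L ε : ℝ} (hL : 0 ≤ L)
    (hup : ∀ x k, 1 ≤ k → a (k * S) x ≤ L) {z : X} (hz : a S z ≤ -L - ε) {d : ℕ}
    (hd : S ∣ d) (hd0 : 0 < d) : a d z ≤ -ε := by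
  obtain ⟨q, rfl⟩ := hd
  match q with
  | 0 => simp at hd0
  | 1 => rw [mul_one]; linarith
  | q + 2 =>
    have h := ha.apply_add_le z ((q + 1) * S) S
    rw [show (q + 1) * S + S = S * (q + 2) by ring] at h
    linarith [hup (f^[S] z) (q + 1) (by lia)]

theorem apply_le_of_forall_exists_lt_iterate_mem (ha : IsSubadditiveCocycle f a) {S T : ℕ}
    (hS : 0 < S) {G ε : ℝ} (hG : ∀ n x, a n x ≤ G) {U : Set X}
    (hU : ∀ z ∈ U, ∀ d, S ∣ d → 0 < d → a d z ≤ -ε) (hT : ∀ x, ∃ t < T, f^[t] x ∈ U)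
    (m : ℕ) (x : X) : a ((m * S + 1) * T) x ≤ 2 * G - m * ε := by
  obtain ⟨g, hg, hgT⟩ := exists_strictMono_iterate_mem f hT x
  obtain ⟨e, he, heK, hmod⟩ := exists_strictMono_fin_modEq g hS m
  set u := g ∘ e
  have hu : StrictMono u := hg.comp he
  have huN : ∀ i, u i ≤ (m * S + 1) * T := fun i =>
    (hgT (e i)).1.le.trans (Nat.mul_le_mul_right _ (heK i))
  have hchain : a (u (Fin.last m) - u 0) (f^[u 0] x) ≤ m * -ε := by
    calc _ ≤ _ := ha.apply_sub_le_sum x u hu.monotone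
      _ ≤ ∑ _i : Fin m, -ε := Finset.sum_le_sum fun i _ =>
        hU _ (hgT (e i.castSucc)).2 _
          ((Nat.modEq_iff_dvd' (hu.monotone (Fin.castSucc_le_succ i))).1 (hmod _ _))
          (Nat.sub_pos_of_lt (hu Fin.castSucc_lt_succ))
      _ = m * -ε := by simp
  calc a ((m * S + 1) * T) x
      = a ((m * S + 1) * T - 0) (f^[0] x) := rfl
    _ ≤ a ((m * S + 1) * T - u (Fin.last m)) (f^[u (Fin.last m)] x) +
          (a (u (Fin.last m) - u 0) (f^[u 0] x) + a (u 0 - 0) (f^[0] x)) :=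
        (ha.apply_sub_le x (Nat.zero_le _) (huN _)).trans
          (add_le_add_right (ha.apply_sub_le x (Nat.zero_le _) (hu.monotone (Fin.zero_le _))) _)
    _ ≤ G + (m * -ε + G) := by gcongr <;> apply hG
    _ = 2 * G - m * ε := by ring

end IsSubadditiveCocycle

theorem exists_forall_le_of_le_add [TopologicalSpace X] [CompactSpace X] {f : X → X}
    {a b : ℕ → X → ℝ} (hb : ∀ n, Continuous (b n))
    (hab : ∀ x n k, a n x ≤ a (n + k) x + b k (f^[n] x)) {S : ℕ} (hS : 0 < S) {L : ℝ}
    (hup : ∀ x k, 1 ≤ k → a (k * S) x ≤ L) : ∃ G, ∀ n x, a n x ≤ G := by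
  obtain ⟨B, hB⟩ := ((Set.finite_Iic S).isCompact_biUnion
    fun k _ => isCompact_range (hb k)).bddAbove
  refine ⟨L + B, fun n x => ?_⟩
  have hmul : n + (S - n % S) = (n / S + 1) * S := by
    have := Nat.div_add_mod' n S
    have := Nat.mod_lt n hS
    rw [add_one_mul]
    omega
  have h := hab x n (S - n % S)
  rw [hmul] at h
  linarith [hup x (n / S + 1) (Nat.le_add_left _ _),
    hB (Set.mem_biUnion (Nat.sub_le S (n % S)) (mem_range_self (f^[n] x)))]

end

/-- abstract form of the main theorem.  For a minimal homeomorphism of a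
compact metric space (minimality expressed by: the only nonempty closed invariant subset is
the whole space) and a subadditive sequence of continuous functions satisfying the two
defining conditions of a generalized dominated splitting, the sequence is uniformly
dominated: `a_N ≤ log τ` everywhere for some `N ≥ 1` and `τ ∈ (0,1)`. -/
theorem stmt7 {X : Type*} [MetricSpace X] [CompactSpace X]
    (f : X ≃ₜ X)
    (hmin : ∀ C : Set X, IsClosed C → C.Nonempty → ⇑f '' C = C → C = Set.univ)
    (a : ℕ → X → ℝ) (ha : ∀ n, Continuous (a n)) (ha0 : ∀ x : X, a 0 x = 0)
    (hsub : ∀ (x : X) (n k : ℕ), a (n + k) x ≤ a n ((⇑f)^[k] x) + a k x)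
    (b : ℕ → X → ℝ) (hb : ∀ n, Continuous (b n))
    (hab : ∀ (x : X) (n k : ℕ), a n x ≤ a (n + k) x + b k ((⇑f)^[n] x))
    (S : ℕ) (hS : 1 ≤ S) (lam : ℝ) (hlam : 0 < lam)
    (hup : ∀ (x : X) (k : ℕ), 1 ≤ k → a (k * S) x ≤ Real.log lam)
    (hx0 : ∃ x0 : X, a S x0 < -Real.log lam) :
    ∃ N : ℕ, 1 ≤ N ∧ ∃ τ : ℝ, 0 < τ ∧ τ < 1 ∧ ∀ x : X, a N x ≤ Real.log τ := by
  obtain hlam1 | hlam1 := lt_or_ge lam 1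
  · exact ⟨S, hS, lam, hlam, hlam1, fun x => by simpa using hup x 1 le_rfl⟩
  have hL : 0 ≤ Real.log lam := Real.log_nonneg hlam1
  obtain ⟨x₀, hx₀⟩ := hx0
  set ε := (-Real.log lam - a S x₀) / 2 with hε_def
  have hε : 0 < ε := by linarith
  set U := {y | a S y < -Real.log lam - ε}
  have hx₀U : x₀ ∈ U := show a S x₀ < -Real.log lam - ε by linarith
  obtain ⟨T, hT⟩ :=
    f.exists_forall_exists_lt_iterate_mem hmin (isOpen_lt (ha S) continuous_const) ⟨x₀, hx₀U⟩
  have hT0 : 0 < T := (hT x₀).elim fun t ht => (Nat.zero_le t).trans_lt ht.1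
  obtain ⟨G, hG⟩ := exists_forall_le_of_le_add hb hab hS hup
  obtain ⟨m, hm⟩ := exists_nat_gt ((2 * G + 1) / ε)
  have hmε : 2 * G + 1 < m * ε := (div_lt_iff₀ hε).1 hm
  have hcocycle : IsSubadditiveCocycle f a := ⟨ha0, hsub⟩
  refine ⟨(m * S + 1) * T, Nat.mul_pos (Nat.succ_pos _) hT0, Real.exp (-1), Real.exp_pos _,
    Real.exp_lt_one_iff.2 (by norm_num), fun x => ?_⟩
  have hx := hcocycle.apply_le_of_forall_exists_lt_iterate_mem hS hG
    (fun z hz _ hd hd0 => hcocycle.apply_le_neg_of_dvd hL hup (le_of_lt hz) hd hd0) hT m x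
  rw [Real.log_exp]
  linarith
end

section
/- Let f : X → X be a continuous map of a compact metric space X, and let a_n : X → ℝ (n ≥ 0) be continuous functions with a_0 ≡ 0 satisfying a_{n+k}(x) ≤ a_n(f^k(x)) + a_k(x) for every x ∈ X and all n, k ≥ 0. Fix an integer S ≥ 1 and a real λ > 0, and suppose a_{kS}(x) ≤ log λ for every x ∈ X and every k ≥ 1. Then for every x ∈ X, limsup_{n→∞} (1/n) a_n(x) ≤ (1/S) · min(log λ, 0) ≤ 0. -/
/-!
Writing `n = qS + r` with `0 ≤ r < S`, the cocycle inequality gives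
`a_n(x) ≤ a_{qS}(f^r x) + a_r(x)`. The remainder term is bounded uniformly by compactness, and
`a_{qS} ≤ min(q log λ, log λ)`: the first bound comes from chaining `a_S ≤ log λ` along the orbit,
the second is the hypothesis itself. Hence `a_n(x) ≤ (n/S) min(log λ, 0) + O(1)`.
-/

open Filter Set Topology

def IsSubadditiveCocycle_s8 {X : Type*} (f : X → X) (a : ℕ → X → ℝ) : Prop :=
  ∀ (x : X) (n k : ℕ), a (n + k) x ≤ a n (f^[k] x) + a k x

namespace IsSubadditiveCocycle_s8

variable {X : Type*} {f : X → X} {a : ℕ → X → ℝ}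

theorem apply_mul_le (h : IsSubadditiveCocycle_s8 f a) {S : ℕ} {c : ℝ} (hc : ∀ y, a S y ≤ c)
    {k : ℕ} (hk : 1 ≤ k) (y : X) : a (k * S) y ≤ k * c := by
  induction k, hk using Nat.le_induction generalizing y with
  | base => simpa using hc y
  | succ k _ ih =>
    calc a ((k + 1) * S) y = a (k * S + S) y := by rw [add_one_mul]
      _ ≤ a (k * S) (f^[S] y) + a S y := h y _ _
      _ ≤ k * c + c := add_le_add (ih _) (hc y)
      _ = ↑(k + 1) * c := by push_cast; ring

theorem apply_le_mul_add (h : IsSubadditiveCocycle_s8 f a) {S : ℕ} (hS : 1 ≤ S) {c M : ℝ}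
    (hup : ∀ (y : X) (k : ℕ), 1 ≤ k → a (k * S) y ≤ c) (hM : ∀ r < S, ∀ y, a r y ≤ M)
    {n : ℕ} (hn : S ≤ n) (x : X) : a n x ≤ n * (1 / S * min c 0) + (|c| + M) := by
  set q := n / S
  set r := n % S
  have hq : 1 ≤ q := (Nat.one_le_div_iff hS).2 hn
  have hS0 : (0 : ℝ) < S := by exact_mod_cast hS
  have hnqr : (n : ℝ) = q * S + r := by exact_mod_cast (Nat.div_add_mod' n S).symm
  have hr : (r : ℝ) < S := by exact_mod_cast Nat.mod_lt n hS
  have hsplit : a n x ≤ a (q * S) (f^[r] x) + a r x :=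
    (Nat.div_add_mod' n S : q * S + r = n) ▸ h x (q * S) r
  have hqS : a (q * S) (f^[r] x) ≤ min (q * c) c :=
    le_min (h.apply_mul_le (fun y => by simpa using hup y 1 le_rfl) hq _) (hup _ q hq)
  have hlin : min ((q : ℝ) * c) c ≤ n * (1 / S * min c 0) + |c| := by
    rw [hnqr]
    rcases le_total c 0 with hc | hc
    · have hrc : S * c ≤ r * c := mul_le_mul_of_nonpos_right hr.le hc
      rw [min_eq_left hc, abs_of_nonpos hc]
      refine (min_le_left _ _).trans ?_
      field_simp
      linarith
    · simp [min_eq_right hc, abs_of_nonneg hc]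
  linarith [hM r (Nat.mod_lt n hS) x]

end IsSubadditiveCocycle_s8

theorem limsup_inv_mul_le_of_le_mul_add {u : ℕ → ℝ} {L K : ℝ}
    (h : ∀ᶠ n in atTop, u n ≤ n * L + K) :
    limsup (fun n : ℕ => ((1 / (n : ℝ) * u n : ℝ) : EReal)) atTop ≤ (L : EReal) := by
  have hlim : Tendsto (fun n : ℕ => ((L + K / n : ℝ) : EReal)) atTop (𝓝 (L : EReal)) :=
    EReal.tendsto_coe.2 (by simpa using tendsto_const_div_atTop_nhds_zero_nat K |>.const_add L)
  refine le_of_le_of_eq (limsup_le_limsup ?_) hlim.limsup_eq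
  filter_upwards [h, eventually_ge_atTop 1] with n hu hn
  have hn0 : (0 : ℝ) < n := by exact_mod_cast hn
  rw [EReal.coe_le_coe_iff, one_div_mul_eq_div, div_le_iff₀ hn0]
  calc u n ≤ n * L + K := hu
    _ = (L + K / n) * n := by field_simp

theorem exists_forall_lt_apply_le_of_continuous {X : Type*} [TopologicalSpace X]
    [CompactSpace X] {a : ℕ → X → ℝ} (ha : ∀ n, Continuous (a n)) (N : ℕ) :
    ∃ M, ∀ r < N, ∀ y, a r y ≤ M := by
  have hbdd : BddAbove (⋃ r ∈ Iio N, range (a r)) :=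
    (finite_Iio N).bddAbove_biUnion.2 fun r _ => (isCompact_range (ha r)).bddAbove
  obtain ⟨M, hM⟩ := hbdd
  exact ⟨M, fun r hr y => hM (mem_biUnion hr (mem_range_self y))⟩

theorem stmt8_general {X : Type*} [MetricSpace X] [CompactSpace X]
    (f : X → X)
    (a : ℕ → X → ℝ) (ha : ∀ n, Continuous (a n))
    (hsub : ∀ (x : X) (n k : ℕ), a (n + k) x ≤ a n (f^[k] x) + a k x)
    (S : ℕ) (hS : 1 ≤ S) (lam : ℝ)
    (hup : ∀ (x : X) (k : ℕ), 1 ≤ k → a (k * S) x ≤ Real.log lam) :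
    ∀ x : X,
      limsup (fun n : ℕ => ((1 / (n : ℝ) * a n x : ℝ) : EReal)) atTop
          ≤ ((1 / (S : ℝ) * min (Real.log lam) 0 : ℝ) : EReal)
        ∧ 1 / (S : ℝ) * min (Real.log lam) 0 ≤ 0 := by
  intro x
  obtain ⟨M, hM⟩ := exists_forall_lt_apply_le_of_continuous ha S
  refine ⟨limsup_inv_mul_le_of_le_mul_add (K := |Real.log lam| + M) ?_, ?_⟩
  · filter_upwards [eventually_ge_atTop S] with n hn
    exact IsSubadditiveCocycle_s8.apply_le_mul_add hsub hS hup hM hn x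
  · exact mul_nonpos_of_nonneg_of_nonpos (by positivity) (min_le_right _ _)

/-- for a subadditive sequence of continuous functions over a continuous map of
a compact metric space satisfying the generalized domination bound `a_{kS} ≤ log λ`
everywhere, the upper exponential growth rate is at most `(1/S) min(log λ, 0) ≤ 0` at every
point. -/
theorem stmt8 {X : Type*} [MetricSpace X] [CompactSpace X]
    (f : X → X) (hf : Continuous f)
    (a : ℕ → X → ℝ) (ha : ∀ n, Continuous (a n)) (ha0 : ∀ x : X, a 0 x = 0)
    (hsub : ∀ (x : X) (n k : ℕ), a (n + k) x ≤ a n (f^[k] x) + a k x)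
    (S : ℕ) (hS : 1 ≤ S) (lam : ℝ) (hlam : 0 < lam)
    (hup : ∀ (x : X) (k : ℕ), 1 ≤ k → a (k * S) x ≤ Real.log lam) :
    ∀ x : X,
      limsup (fun n : ℕ => ((1 / (n : ℝ) * a n x : ℝ) : EReal)) atTop
          ≤ ((1 / (S : ℝ) * min (Real.log lam) 0 : ℝ) : EReal)
        ∧ 1 / (S : ℝ) * min (Real.log lam) 0 ≤ 0 :=
  stmt8_general f a ha hsub S hS lam hup
end

section
/- Let f be a minimal homeomorphism of a compact metric space X. Let a_n : X → ℝ (n ≥ 0) be continuous functions with a_0 ≡ 0 satisfying a_{n+k}(x) ≤ a_n(f^k(x)) + a_k(x) for every x ∈ X and all n, k ≥ 0, and suppose there are continuous functions b_n : X → ℝ (n ≥ 0) with a_n(x) ≤ a_{n+k}(x) + b_k(f^n(x)) for every x ∈ X and all n, k ≥ 0. Fix an integer S ≥ 1 and a real λ ≥ 1, and suppose: (i) a_{kS}(x) ≤ log λ for every x ∈ X and every k ≥ 1; (ii) there exists x₀ ∈ X with liminf_{n→∞} (1/n) a_n(x₀) < 0. Then there exist an integer N ≥ 1 and a real τ ∈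 (0,1) such that a_N(x) ≤ log τ for every x ∈ X. -/
/-!
Subadditivity together with the bound on the multiples of `S` bounds every `a n` above by a
constant `A`. The liminf hypothesis gives a time `K` with `a K x₀ < -(2A + 1)`, an open condition
at `x₀`. By minimality and compactness every orbit visits this open set within a uniform time `T`,
and splitting `a (T + K)` at that visit gives `a (T + K) ≤ A + a K (fᵗ x) + A < -1`.
-/

open Filter Set

theorem IsClosedMap.iterate {X : Type*} [TopologicalSpace X] {f : X → X} (hf : IsClosedMap f) :
    ∀ n, IsClosedMap f^[n]
  | 0 => IsClosedMap.id
  | n + 1 => by rw [Function.iterate_succ']; exact hf.comp (hf.iterate n)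

theorem Homeomorph.exists_invariant_subset_of_image_subset {X : Type*} [TopologicalSpace X]
    [CompactSpace X] (f : X ≃ₜ X) {C : Set X} (hC : IsClosed C) (hCne : C.Nonempty)
    (hfC : f '' C ⊆ C) : ∃ D ⊆ C, IsClosed D ∧ D.Nonempty ∧ f '' D = D := by
  set s : ℕ → Set X := fun n => f^[n] '' C
  have hs_succ : ∀ n, s (n + 1) = f '' s n := fun n => by
    simp only [s, Function.iterate_succ', image_comp]
  have hs_anti : Antitone s := antitone_nat_of_succ_le fun n => by
    induction n with
    | zero => rw [hs_succ]; simpa only [s, Function.iterate_zero, image_id] using hfC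
    | succ n ih => rw [hs_succ (n + 1), hs_succ n]; exact image_mono (hs_succ n ▸ ih)
  have hs_closed : ∀ n, IsClosed (s n) := fun n => f.isClosedMap.iterate n C hC
  refine ⟨⋂ n, s n, iInter_subset_of_subset 0 (by simp [s]), isClosed_iInter hs_closed,
    IsCompact.nonempty_iInter_of_sequence_nonempty_isCompact_isClosed s
      (fun n => hs_anti n.le_succ) (fun n => hCne.image _) (hs_closed 0).isCompact hs_closed, ?_⟩
  rw [image_iInter f.bijective, ← hs_anti.iInter_nat_add 1]
  simp only [hs_succ]

theorem Homeomorph.exists_forall_exists_iterate_mem {X : Type*} [TopologicalSpace X]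
    [CompactSpace X] (f : X ≃ₜ X)
    (hmin : ∀ C : Set X, IsClosed C → C.Nonempty → ⇑f '' C = C → C = univ)
    {U : Set X} (hU : IsOpen U) (hUne : U.Nonempty) :
    ∃ T, ∀ x, ∃ t ≤ T, f^[t] x ∈ U := by
  have hcover : ⋃ t, f^[t] ⁻¹' U = univ := by
    by_contra hne
    set C := (⋃ t, f^[t] ⁻¹' U)ᶜ
    have hC : IsClosed C :=
      (isOpen_iUnion fun t => hU.preimage (f.continuous.iterate t)).isClosed_compl
    have hfC : f '' C ⊆ C := by
      rintro _ ⟨x, hx, rfl⟩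
      simp only [C, mem_compl_iff, mem_iUnion, mem_preimage, not_exists] at hx ⊢
      exact fun t => by simpa only [← Function.iterate_succ_apply] using hx (t + 1)
    obtain ⟨D, hDC, hD, hDne, hfD⟩ :=
      f.exists_invariant_subset_of_image_subset hC (nonempty_compl.2 hne) hfC
    obtain ⟨x, hx⟩ := hUne
    have hxC : x ∈ C := hDC (hmin D hD hDne hfD ▸ mem_univ x)
    exact hxC (mem_iUnion.2 ⟨0, hx⟩)
  obtain ⟨s, hs⟩ := isCompact_univ.elim_finite_subcover _
    (fun t => hU.preimage (f.continuous.iterate t)) hcover.ge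
  refine ⟨s.sup id, fun x => ?_⟩
  obtain ⟨t, ht, hxt⟩ := mem_iUnion₂.1 (hs (mem_univ x))
  exact ⟨t, s.le_sup (f := id) ht, hxt⟩

theorem exists_lt_of_liminf_div_lt_zero {u : ℕ → ℝ}
    (h : liminf (fun n : ℕ => ((1 / (n : ℝ) * u n : ℝ) : EReal)) atTop < 0) (C : ℝ) :
    ∃ n, 1 ≤ n ∧ u n < C := by
  obtain ⟨c, hlt, hc⟩ := EReal.exists_between_coe_real h
  have hc : c < 0 := by exact_mod_cast hc
  obtain ⟨n, hn, hun⟩ :=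
    frequently_atTop.1 (frequently_lt_of_liminf_lt (by isBoundedDefault) hlt) (max 1 ⌈C / c⌉₊)
  have hn1 : 1 ≤ n := (le_max_left _ _).trans hn
  have hnpos : (0 : ℝ) < n := by exact_mod_cast hn1
  have hun : u n < n * c := by
    have : 1 / (n : ℝ) * u n < c := by exact_mod_cast hun
    rwa [one_div_mul_eq_div, div_lt_iff₀ hnpos, mul_comm] at this
  have hCn : C / c ≤ n := (Nat.le_ceil _).trans (by exact_mod_cast (le_max_right _ _).trans hn)
  refine ⟨n, hn1, hun.trans_le ?_⟩
  rwa [div_le_iff_of_neg hc] at hCn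

section Subadditive

variable {X : Type*} {T : X → X} {a : ℕ → X → ℝ}

theorem exists_forall_le_of_subadditive [TopologicalSpace X] [CompactSpace X]
    (hsub : ∀ (x : X) (n k : ℕ), a (n + k) x ≤ a n (T^[k] x) + a k x)
    (ha : ∀ n, Continuous (a n)) {S : ℕ} (hS : 1 ≤ S) {L : ℝ}
    (hup : ∀ (x : X) (k : ℕ), 1 ≤ k → a (k * S) x ≤ L) :
    ∃ A, ∀ n x, a n x ≤ A := by
  obtain ⟨M, hM⟩ : BddAbove (⋃ r ∈ Iio S, range (a r)) :=
    (finite_Iio S).bddAbove_biUnion.2 fun r _ => (isCompact_range (ha r)).bddAbove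
  have hMr : ∀ r < S, ∀ x, a r x ≤ M := fun r hr x =>
    hM (mem_biUnion (mem_Iio.2 hr) (mem_range_self x))
  refine ⟨max M (L + M), fun n x => ?_⟩
  have hr : n % S < S := Nat.mod_lt _ hS
  rcases Nat.eq_zero_or_pos (n / S) with hq | hq
  · have hn : n = n % S := by rw [← Nat.div_add_mod n S, hq]; simp
    exact le_max_of_le_left (hn ▸ hMr _ hr x)
  · calc a n x = a (n / S * S + n % S) x := by rw [Nat.div_add_mod']
      _ ≤ a (n / S * S) (T^[n % S] x) + a (n % S) x := hsub _ _ _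
      _ ≤ L + M := add_le_add (hup _ _ hq) (hMr _ hr x)
      _ ≤ max M (L + M) := le_max_right _ _

theorem le_add_apply_iterate_of_subadditive
    (hsub : ∀ (x : X) (n k : ℕ), a (n + k) x ≤ a n (T^[k] x) + a k x) {A : ℝ}
    (hA : ∀ n x, a n x ≤ A) (x : X) (m k t : ℕ) : a (m + k + t) x ≤ A + a k (T^[t] x) + A :=
  calc a (m + k + t) x ≤ a (m + k) (T^[t] x) + a t x := hsub _ _ _
    _ ≤ a m (T^[k] (T^[t] x)) + a k (T^[t] x) + a t x := by gcongr; exact hsub _ _ _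
    _ ≤ A + a k (T^[t] x) + A := by gcongr <;> apply hA

end Subadditive

theorem stmt9_general {X : Type*} [MetricSpace X] [CompactSpace X]
    (f : X ≃ₜ X)
    (hmin : ∀ C : Set X, IsClosed C → C.Nonempty → ⇑f '' C = C → C = Set.univ)
    (a : ℕ → X → ℝ) (ha : ∀ n, Continuous (a n))
    (hsub : ∀ (x : X) (n k : ℕ), a (n + k) x ≤ a n ((⇑f)^[k] x) + a k x)
    (S : ℕ) (hS : 1 ≤ S) (lam : ℝ)
    (hup : ∀ (x : X) (k : ℕ), 1 ≤ k → a (k * S) x ≤ Real.log lam)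
    (hx0 : ∃ x0 : X,
      liminf (fun n : ℕ => ((1 / (n : ℝ) * a n x0 : ℝ) : EReal)) atTop < 0) :
    ∃ N : ℕ, 1 ≤ N ∧ ∃ τ : ℝ, 0 < τ ∧ τ < 1 ∧ ∀ x : X, a N x ≤ Real.log τ := by
  obtain ⟨A, hA⟩ := exists_forall_le_of_subadditive hsub ha hS hup
  obtain ⟨x0, hx0⟩ := hx0
  obtain ⟨K, hK1, hK⟩ := exists_lt_of_liminf_div_lt_zero hx0 (-(2 * A + 1))
  obtain ⟨T, hT⟩ := f.exists_forall_exists_iterate_mem hmin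
    (isOpen_lt (ha K) continuous_const) ⟨x0, hK⟩
  refine ⟨T + K, by omega, Real.exp (-1), Real.exp_pos _, Real.exp_lt_one_iff.2 (by norm_num),
    fun x => ?_⟩
  obtain ⟨t, htT, hxt⟩ := hT x
  have hN : T + K = T - t + K + t := by omega
  have hsplit := le_add_apply_iterate_of_subadditive hsub hA x (T - t) K t
  rw [Real.log_exp, hN]
  linarith [hsplit, show a K (f^[t] x) < -(2 * A + 1) from hxt]

/-- abstract form of the Corollary.  For a minimal homeomorphism of a compact
metric space (minimality expressed by: the only nonempty closed invariant subset is the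
whole space) and a subadditive sequence of continuous functions satisfying the uniform bound
`a_{kS} ≤ log λ` (λ ≥ 1) together with a single point whose lower growth rate is negative,
the sequence is uniformly dominated: `a_N ≤ log τ` everywhere for some `N ≥ 1`, `τ ∈ (0,1)`. -/
theorem stmt9 {X : Type*} [MetricSpace X] [CompactSpace X]
    (f : X ≃ₜ X)
    (hmin : ∀ C : Set X, IsClosed C → C.Nonempty → ⇑f '' C = C → C = Set.univ)
    (a : ℕ → X → ℝ) (ha : ∀ n, Continuous (a n)) (ha0 : ∀ x : X, a 0 x = 0)
    (hsub : ∀ (x : X) (n k : ℕ), a (n + k) x ≤ a n ((⇑f)^[k] x) + a k x)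
    (b : ℕ → X → ℝ) (hb : ∀ n, Continuous (b n))
    (hab : ∀ (x : X) (n k : ℕ), a n x ≤ a (n + k) x + b k ((⇑f)^[n] x))
    (S : ℕ) (hS : 1 ≤ S) (lam : ℝ) (hlam : 1 ≤ lam)
    (hup : ∀ (x : X) (k : ℕ), 1 ≤ k → a (k * S) x ≤ Real.log lam)
    (hx0 : ∃ x0 : X,
      liminf (fun n : ℕ => ((1 / (n : ℝ) * a n x0 : ℝ) : EReal)) atTop < 0) :
    ∃ N : ℕ, 1 ≤ N ∧ ∃ τ : ℝ, 0 < τ ∧ τ < 1 ∧ ∀ x : X, a N x ≤ Real.log τ :=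
  stmt9_general f hmin a ha hsub S hS lam hup hx0
end

section
/- Let f : X → X be a continuous map of a compact metric space X, and let a_n : X → ℝ (n ≥ 0) be continuous functions with a_0 ≡ 0 satisfying a_{n+k}(x) ≤ a_n(f^k(x)) + a_k(x) for every x ∈ X and all n, k ≥ 0. Then for every x ∈ X and every integer S ≥ 1, liminf_{k→∞} (1/(kS)) a_{kS}(x) ≤ liminf_{n→∞} (1/n) a_n(x). -/
/-!
Round `n` up to the next multiple `kS` of `S`, so that `kS = r + n` with `r ≤ S`. The cocycle
inequality gives `a_{kS}(x) ≤ a_r(fⁿ x) + a_n(x) ≤ C + a_n(x)`, where `C` bounds the finitely many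
continuous functions `a_0, …, a_S` on the compact space. Dividing by `kS ∈ [n, n + S]` shows
`a_{kS}(x)/(kS) ≤ c + O(1/n)` whenever `a_n(x)/n < c`, and this happens for infinitely many `n`
as soon as `c` exceeds the lower limit along all integers.
-/

open Filter Set

lemma exists_nonneg_forall_le_of_continuous {X : Type*} [TopologicalSpace X] [CompactSpace X]
    (a : ℕ → X → ℝ) (ha : ∀ n, Continuous (a n)) (N : ℕ) :
    ∃ C : ℝ, 0 ≤ C ∧ ∀ r ≤ N, ∀ y, a r y ≤ C := by
  have hbdd : BddAbove (⋃ r ∈ Iic N, range (a r)) :=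
    (finite_Iic N).bddAbove_biUnion.mpr fun r _ => (isCompact_range (ha r)).bddAbove
  obtain ⟨C, hC⟩ := hbdd
  exact ⟨max C 0, le_max_right _ _, fun r hr y =>
    le_max_of_le_left (hC (mem_biUnion (mem_Iic.mpr hr) (mem_range_self y)))⟩

lemma le_add_of_subadditive_cocycle {X : Type*} {f : X → X} {a : ℕ → X → ℝ}
    (hsub : ∀ (x : X) (n k : ℕ), a (n + k) x ≤ a n (f^[k] x) + a k x)
    {S : ℕ} {C : ℝ} (hC : ∀ r ≤ S, ∀ y, a r y ≤ C) (x : X) {n m : ℕ} (hnm : n ≤ m)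
    (hmn : m ≤ n + S) : a m x ≤ C + a n x := by
  obtain ⟨r, rfl⟩ : ∃ r, m = r + n := ⟨m - n, by omega⟩
  linarith [hsub x r n, hC r (by omega) (f^[n] x)]

lemma div_le_add_of_le_add_mul {C c S n D v : ℝ} (hC : 0 ≤ C) (hn : 0 < n) (hnD : n ≤ D)
    (hDS : D ≤ n + S) (hv : v ≤ C + c * n) : v / D ≤ c + (C + S * |c|) / n := by
  have hD : 0 < D := hn.trans_le hnD
  have hdefect : c * (n - D) ≤ S * |c| := by
    nlinarith [neg_abs_le c, abs_nonneg c]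
  calc v / D ≤ (C + c * n) / D := by gcongr
    _ = c + (C + c * (n - D)) / D := by field_simp; ring
    _ ≤ c + (C + S * |c|) / D := by gcongr
    _ ≤ c + (C + S * |c|) / n := by gcongr; nlinarith [abs_nonneg c]

lemma div_le_of_subadditive_cocycle {X : Type*} {f : X → X} {a : ℕ → X → ℝ}
    (hsub : ∀ (x : X) (n k : ℕ), a (n + k) x ≤ a n (f^[k] x) + a k x)
    {S : ℕ} {C : ℝ} (hC0 : 0 ≤ C) (hC : ∀ r ≤ S, ∀ y, a r y ≤ C) (hS : 0 < S) (x : X)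
    {n : ℕ} (hn : 0 < n) {c : ℝ} (hnc : a n x / n < c) :
    a ((n / S + 1) * S) x / ((n / S + 1) * S : ℕ) ≤ c + (C + S * |c|) / n := by
  have hn' : (0 : ℝ) < n := by exact_mod_cast hn
  have hnk : n ≤ (n / S + 1) * S := by linarith [Nat.lt_div_mul_add (a := n) hS]
  have hkn : (n / S + 1) * S ≤ n + S := by linarith [Nat.div_mul_le_self n S]
  refine div_le_add_of_le_add_mul hC0 hn' (by exact_mod_cast hnk) (by exact_mod_cast hkn) ?_
  linarith [le_add_of_subadditive_cocycle hsub hC x hnk hkn, (div_lt_iff₀ hn').mp hnc]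

lemma EReal.liminf_le_liminf_of_frequently_le {α β : Type*} {l : Filter α} {l' : Filter β}
    {u : α → EReal} {v : β → EReal}
    (h : ∀ c c' : ℝ, c < c' → (∃ᶠ n in l', v n < c) → ∃ᶠ k in l, u k ≤ c') :
    liminf u l ≤ liminf v l' := by
  refine EReal.le_of_forall_lt_iff_le.mp fun c' hc' => ?_
  obtain ⟨c, hvc, hcc'⟩ := EReal.exists_between_coe_real hc'
  exact liminf_le_of_frequently_le' <|
    h c c' (EReal.coe_lt_coe_iff.mp hcc') (frequently_lt_of_liminf_lt (by isBoundedDefault) hvc)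

theorem stmt10_general {X : Type*} [MetricSpace X] [CompactSpace X]
    (f : X → X)
    (a : ℕ → X → ℝ) (ha : ∀ n, Continuous (a n))
    (hsub : ∀ (x : X) (n k : ℕ), a (n + k) x ≤ a n (f^[k] x) + a k x) :
    ∀ x : X, ∀ S : ℕ, 1 ≤ S →
      liminf (fun k : ℕ => ((1 / ((k * S : ℕ) : ℝ) * a (k * S) x : ℝ) : EReal)) atTop
        ≤ liminf (fun n : ℕ => ((1 / (n : ℝ) * a n x : ℝ) : EReal)) atTop := by
  intro x S hS
  obtain ⟨C, hC0, hC⟩ := exists_nonneg_forall_le_of_continuous a ha S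
  refine EReal.liminf_le_liminf_of_frequently_le fun c c' hcc' hfreq => ?_
  obtain ⟨N, hN⟩ := exists_nat_ge ((C + S * |c|) / (c' - c))
  have hk : Tendsto (fun n => n / S + 1) atTop atTop :=
    (tendsto_add_atTop_nat 1).comp (Nat.tendsto_div_const_atTop (by omega))
  refine hk.frequently_map _ (fun n ⟨hnc, hNn⟩ => ?_)
    (hfreq.and_eventually (eventually_ge_atTop (N + 1)))
  have hn : (0 : ℝ) < n := by exact_mod_cast (by omega : 0 < n)
  have herr : (C + S * |c|) / n ≤ c' - c := by
    rw [div_le_iff₀ hn, ← div_le_iff₀' (by linarith)]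
    exact hN.trans (by exact_mod_cast (by omega : N ≤ n))
  rw [EReal.coe_lt_coe_iff, one_div_mul_eq_div] at hnc
  rw [EReal.coe_le_coe_iff, one_div_mul_eq_div]
  linarith [div_le_of_subadditive_cocycle hsub hC0 hC hS x (by omega) hnc]

/-- for a subadditive sequence of continuous functions over a continuous map
of a compact metric space, the lower growth rate along multiples of `S` is at most the lower
growth rate along all positive integers. -/
theorem stmt10 {X : Type*} [MetricSpace X] [CompactSpace X]
    (f : X → X) (hf : Continuous f)
    (a : ℕ → X → ℝ) (ha : ∀ n, Continuous (a n)) (ha0 : ∀ x : X, a 0 x = 0)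
    (hsub : ∀ (x : X) (n k : ℕ), a (n + k) x ≤ a n (f^[k] x) + a k x) :
    ∀ x : X, ∀ S : ℕ, 1 ≤ S →
      liminf (fun k : ℕ => ((1 / ((k * S : ℕ) : ℝ) * a (k * S) x : ℝ) : EReal)) atTop
        ≤ liminf (fun n : ℕ => ((1 / (n : ℝ) * a n x : ℝ) : EReal)) atTop :=
  stmt10_general f a ha hsub
end

section
/- Let f : X → X be a homeomorphism of a compact metric space X, let μ be an f-invariant Borel probability measure, and let a_n : X → ℝ (n ≥ 0) be continuous functions with a_0 ≡ 0 satisfying a_{n+k}(x) ≤ a_n(f^k(x)) + a_k(x) for every x ∈ X and all n, k ≥ 0. Fix an integer S ≥ 1 and a real λ ≥ 1, and suppose a_{kS}(x) ≤ log λ for every x ∈ X and every k ≥ 1. Let A := {x ∈ X : a_S(x) < −log λ}. Then for μ-almost every x ∈ A, liminf_{n→∞} (1/n) a_n(x) < 0. -/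
/-!
Fix `δ > 0` and put `B = {a_S ≤ -log λ - δ}`. Along the orbit of `f^S`, cutting at the last
visit to `B` before time `N` and using subadditivity together with `a_{kS} ≤ log λ` shows that
every visit lowers the bound by `δ`: `a_{NS}(x) ≤ log λ - δ · #{j < N | f^{jS} x ∈ B}`.
On the other hand, since `μ` is `f^S`-invariant, almost every point of `B` returns to `B` with
positive upper frequency: on the invariant set `I` where that frequency vanishes, the averaged
visit counts integrate to `μ (B ∩ I)` for every `N`, and reverse Fatou forces `μ (B ∩ I) = 0`.
So `a_{NS}(x) ≤ -ε N` for infinitely many `N`; letting `δ = 1/(m+1)` exhausts `A`.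
-/

open MeasureTheory Filter Set

open scoped ENNReal

lemma ENNReal.limsup_div_le_of_le_add_one {u v : ℕ → ℕ} (h : ∀ n, u n ≤ v n + 1) :
    limsup (fun n => (u n : ℝ≥0∞) / n) atTop ≤ limsup (fun n => (v n : ℝ≥0∞) / n) atTop :=
  calc limsup (fun n => (u n : ℝ≥0∞) / n) atTop
      ≤ limsup ((fun n => (v n : ℝ≥0∞) / n) + (fun n : ℕ => (n : ℝ≥0∞)⁻¹)) atTop := by
        refine limsup_le_limsup (Eventually.of_forall fun n => ?_)
        calc (u n : ℝ≥0∞) / n ≤ ((v n + 1 : ℕ) : ℝ≥0∞) / n := by gcongr; exact h n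
          _ = _ := by rw [Nat.cast_succ, ENNReal.add_div, one_div]; rfl
    _ = limsup (fun n => (v n : ℝ≥0∞) / n) atTop :=
        ENNReal.limsup_add_of_right_tendsto_zero ENNReal.tendsto_inv_nat_nhds_zero _

lemma exists_pos_frequently_mul_le_of_limsup_div_ne_zero {u : ℕ → ℕ}
    (h : limsup (fun n => (u n : ℝ≥0∞) / n) atTop ≠ 0) :
    ∃ r : ℝ, 0 < r ∧ ∃ᶠ n in atTop, r * n ≤ u n := by
  obtain ⟨r, hr0, hr⟩ := ENNReal.lt_iff_exists_nnreal_btwn.mp (pos_iff_ne_zero.mpr h)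
  refine ⟨r, by exact_mod_cast hr0, (frequently_lt_of_lt_limsup (by isBoundedDefault) hr).mono
    fun n hn => ?_⟩
  have hun : (u n : ℝ≥0∞) ≠ 0 := by rintro h; simp [h] at hn
  have hrn : (r : ℝ≥0∞) * n ≤ u n :=
    (ENNReal.le_div_iff_mul_le (Or.inr hun) (Or.inr (by simp))).mp hn.le
  exact_mod_cast ENNReal.toReal_mono (by simp) hrn

lemma frequently_le_neg_mul_of_le_sub_mul {u v : ℕ → ℝ} {L δ r : ℝ} (hδ : 0 < δ) (hr : 0 < r)
    (huv : ∀ n, u n ≤ L - δ * v n) (hv : ∃ᶠ n in atTop, r * n ≤ v n) :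
    ∃ᶠ n in atTop, u n ≤ -(δ * r / 2) * n := by
  refine (hv.and_eventually (eventually_ge_atTop ⌈2 * L / (δ * r)⌉₊)).mono fun n ⟨hrv, hn⟩ => ?_
  have hL : 2 * L ≤ δ * r * n := (div_le_iff₀' (by positivity)).mp (Nat.ceil_le.mp hn)
  nlinarith [huv n, mul_le_mul_of_nonneg_left hrv hδ.le]

lemma liminf_one_div_mul_lt_zero_of_frequently_le_neg_mul {u : ℕ → ℝ} {S : ℕ} (hS : 0 < S)
    {ε : ℝ} (hε : 0 < ε) (h : ∃ᶠ N in atTop, u (N * S) ≤ -ε * N) :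
    liminf (fun n : ℕ => ((1 / (n : ℝ) * u n : ℝ) : EReal)) atTop < 0 := by
  have hS' : (0 : ℝ) < S := by exact_mod_cast hS
  have hmul : ∃ᶠ n : ℕ in atTop, 1 / (n : ℝ) * u n ≤ -(ε / S) := by
    refine (tendsto_atTop_mono (fun N => Nat.le_mul_of_pos_right N hS) tendsto_id).frequently
      ((h.and_eventually (eventually_gt_atTop 0)).mono fun N ⟨huN, hN⟩ => ?_)
    have hN : (0 : ℝ) < N := by exact_mod_cast hN
    rw [Nat.cast_mul, one_div, inv_mul_le_iff₀ (by positivity)]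
    calc u (N * S) ≤ -ε * N := huN
      _ = N * S * -(ε / S) := by field_simp
  refine lt_of_le_of_lt (b := ((-(ε / S) : ℝ) : EReal))
    (liminf_le_of_frequently_le' (hmul.mono fun n hn => EReal.coe_le_coe_iff.mpr hn)) ?_
  exact_mod_cast neg_neg_of_pos (by positivity)

section VisitCount

variable {X : Type*} (T : X → X) (B : Set X)

noncomputable def visitCount (n : ℕ) (x : X) : ℕ := birkhoffSum T (B.indicator 1) n x

lemma indicator_one_apply_le_one (y : X) : B.indicator (1 : X → ℕ) y ≤ 1 :=
  indicator_apply_le' (fun _ => le_rfl) fun _ => zero_le_one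

lemma visitCount_zero (x : X) : visitCount T B 0 x = 0 := birkhoffSum_zero _ _ _

lemma visitCount_succ (n : ℕ) (x : X) :
    visitCount T B (n + 1) x = visitCount T B n x + B.indicator 1 (T^[n] x) :=
  birkhoffSum_succ _ _ _ _

lemma visitCount_succ' (n : ℕ) (x : X) :
    visitCount T B (n + 1) x = B.indicator 1 x + visitCount T B n (T x) :=
  birkhoffSum_succ' _ _ _ _

lemma visitCount_le_self (n : ℕ) (x : X) : visitCount T B n x ≤ n := by
  induction n with
  | zero => simp [visitCount_zero]
  | succ n ih =>
    rw [visitCount_succ]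
    exact add_le_add ih (indicator_one_apply_le_one B _)

lemma visitCount_le_visitCount_apply_add_one (n : ℕ) (x : X) :
    visitCount T B n x ≤ visitCount T B n (T x) + 1 :=
  calc visitCount T B n x ≤ visitCount T B (n + 1) x := by rw [visitCount_succ]; omega
    _ = B.indicator 1 x + visitCount T B n (T x) := visitCount_succ' ..
    _ ≤ visitCount T B n (T x) + 1 := by
      rw [add_comm]; exact Nat.add_le_add_left (indicator_one_apply_le_one B x) _

lemma visitCount_apply_le_visitCount_add_one (n : ℕ) (x : X) :
    visitCount T B n (T x) ≤ visitCount T B n x + 1 :=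
  calc visitCount T B n (T x) ≤ visitCount T B (n + 1) x := by rw [visitCount_succ']; omega
    _ ≤ visitCount T B n x + 1 := by
      rw [visitCount_succ]; exact Nat.add_le_add_left (indicator_one_apply_le_one B _) _

lemma visitCount_eq_zero_or_exists_last_visit (n : ℕ) (x : X) :
    visitCount T B n x = 0 ∨
      ∃ j < n, T^[j] x ∈ B ∧ visitCount T B n x = visitCount T B j x + 1 := by
  induction n with
  | zero => exact Or.inl (visitCount_zero T B x)
  | succ n ih =>
    by_cases hn : T^[n] x ∈ B
    · exact Or.inr ⟨n, n.lt_succ_self, hn, by rw [visitCount_succ, indicator_of_mem hn]; rfl⟩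
    · rw [visitCount_succ, indicator_of_notMem hn, add_zero]
      exact ih.imp_right fun ⟨j, hj, hjB, hcount⟩ => ⟨j, hj.trans n.lt_succ_self, hjB, hcount⟩

lemma natCast_visitCount {R : Type*} [AddCommMonoidWithOne R] (n : ℕ) (x : X) :
    (visitCount T B n x : R) = birkhoffSum T (B.indicator 1) n x := by
  rw [visitCount, birkhoffSum, birkhoffSum, Nat.cast_sum]
  refine Finset.sum_congr rfl fun k _ => ?_
  by_cases h : T^[k] x ∈ B <;> simp [h]

noncomputable def upperVisitFrequency (x : X) : ℝ≥0∞ :=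
  limsup (fun n => (visitCount T B n x : ℝ≥0∞) / n) atTop

lemma upperVisitFrequency_apply (x : X) :
    upperVisitFrequency T B (T x) = upperVisitFrequency T B x :=
  le_antisymm
    (ENNReal.limsup_div_le_of_le_add_one (visitCount_apply_le_visitCount_add_one T B · x))
    (ENNReal.limsup_div_le_of_le_add_one (visitCount_le_visitCount_apply_add_one T B · x))

end VisitCount

section Subadditive

variable {X : Type*} {T : X → X} {B : Set X} {c : ℕ → X → ℝ} {L δ : ℝ}

lemma subadditive_comp_mul (hsub : ∀ x n k, c (n + k) x ≤ c n (T^[k] x) + c k x)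
    (S : ℕ) (x : X) (n k : ℕ) :
    c ((n + k) * S) x ≤ c (n * S) ((T^[S])^[k] x) + c (k * S) x := by
  simpa only [← Function.iterate_mul, add_mul, mul_comm S k] using hsub x (n * S) (k * S)

theorem add_mul_visitCount_le_of_subadditive
    (hsub : ∀ x n k, c (n + k) x ≤ c n (T^[k] x) + c k x)
    (hbound : ∀ n x, c n x ≤ L) (hB : ∀ x ∈ B, c 1 x ≤ -L - δ) (n : ℕ) (x : X) :
    c n x + δ * visitCount T B n x ≤ L := by
  induction n using Nat.strong_induction_on with
  | _ n ih =>
    rcases visitCount_eq_zero_or_exists_last_visit T B n x with hzero | ⟨j, hjn, hjB, hcount⟩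
    · simpa [hzero] using hbound n x
    have htail : c n x ≤ c (n - (j + 1)) (T^[j + 1] x) + c (j + 1) x := by
      simpa only [Nat.sub_add_cancel hjn] using hsub x (n - (j + 1)) (j + 1)
    have hvisit : c (j + 1) x ≤ c 1 (T^[j] x) + c j x := by
      simpa only [add_comm 1 j] using hsub x 1 j
    calc c n x + δ * visitCount T B n x
        ≤ L + (-L - δ) + c j x + δ * (visitCount T B j x + 1) := by
          rw [hcount, Nat.cast_succ]
          linarith [hbound (n - (j + 1)) (T^[j + 1] x), hB _ hjB]
      _ = c j x + δ * visitCount T B j x := by ring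
      _ ≤ L := ih j hjn

end Subadditive

theorem MeasureTheory.MeasurePreserving.lintegral_birkhoffSum {X : Type*} [MeasurableSpace X]
    {μ : Measure X} {T : X → X} (hT : MeasurePreserving T μ μ) {g : X → ℝ≥0∞}
    (hg : Measurable g) (n : ℕ) :
    ∫⁻ x, birkhoffSum T g n x ∂μ = n * ∫⁻ x, g x ∂μ := by
  simp only [birkhoffSum]
  rw [lintegral_finsetSum (f := fun k x => g (T^[k] x)) _
    fun k _ => hg.comp (hT.iterate k).measurable]
  simp [(hT.iterate _).lintegral_comp hg]

section Recurrence

variable {X : Type*} [MeasurableSpace X] {μ : Measure X} {T : X → X} {B : Set X}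

lemma measurable_visitCount (hT : Measurable T) (hB : MeasurableSet B) (n : ℕ) :
    Measurable fun x => (visitCount T B n x : ℝ≥0∞) := by
  simp only [natCast_visitCount, birkhoffSum]
  exact Finset.measurable_sum _ fun k _ => (measurable_one.indicator hB).comp (hT.iterate k)

lemma measurable_upperVisitFrequency (hT : Measurable T) (hB : MeasurableSet B) :
    Measurable (upperVisitFrequency T B) :=
  .limsup fun n => (measurable_visitCount hT hB n).div_const _

theorem measure_inter_upperVisitFrequency_eq_zero [IsFiniteMeasure μ]
    (hT : MeasurePreserving T μ μ) (hB : MeasurableSet B) :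
    μ (B ∩ {x | upperVisitFrequency T B x = 0}) = 0 := by
  set I := {x | upperVisitFrequency T B x = 0}
  have hI : MeasurableSet I :=
    measurable_upperVisitFrequency hT.measurable hB (measurableSet_singleton 0)
  have hTI : MeasurePreserving T (μ.restrict I) (μ.restrict I) := by
    have hpre : T ⁻¹' I = I := by ext x; simp [I, upperVisitFrequency_apply]
    simpa only [hpre] using hT.restrict_preimage hI
  have hmean : ∀ n ≠ 0, ∫⁻ x in I, (visitCount T B n x : ℝ≥0∞) / n ∂μ = μ (B ∩ I) := by
    intro n hn
    simp only [natCast_visitCount, ENNReal.div_eq_inv_mul]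
    rw [lintegral_const_mul' _ _ (by simpa using hn),
      hTI.lintegral_birkhoffSum (measurable_one.indicator hB), lintegral_indicator_one hB,
      Measure.restrict_apply hB, ← mul_assoc,
      ENNReal.inv_mul_cancel (by exact_mod_cast hn) (by simp), one_mul]
  have hfatou := limsup_lintegral_le (μ := μ.restrict I)
    (f := fun n x => (visitCount T B n x : ℝ≥0∞) / n) (fun _ => 1)
    (fun n => (measurable_visitCount hT.measurable hB n).div_const _)
    (fun n => ae_of_all _ fun x => ENNReal.div_le_of_le_mul <| by
      rw [one_mul]; exact_mod_cast visitCount_le_self T B n x)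
    (by simp)
  apply nonpos_iff_eq_zero.mp
  calc μ (B ∩ I)
      = limsup (fun n : ℕ => ∫⁻ x in I, (visitCount T B n x : ℝ≥0∞) / n ∂μ) atTop :=
        ((limsup_congr ((eventually_ne_atTop 0).mono hmean)).trans (limsup_const _)).symm
    _ ≤ ∫⁻ x in I, upperVisitFrequency T B x ∂μ := hfatou
    _ = 0 := (setLIntegral_congr_fun hI fun x hx => hx).trans lintegral_zero

theorem ae_exists_pos_frequently_mul_le_visitCount [IsFiniteMeasure μ]
    (hT : MeasurePreserving T μ μ) (hB : MeasurableSet B) :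
    ∀ᵐ x ∂μ, x ∈ B → ∃ r : ℝ, 0 < r ∧ ∃ᶠ n in atTop, r * n ≤ visitCount T B n x := by
  filter_upwards [measure_eq_zero_iff_ae_notMem.mp
    (measure_inter_upperVisitFrequency_eq_zero hT hB)] with x hx hxB
  exact exists_pos_frequently_mul_le_of_limsup_div_ne_zero fun h => hx ⟨hxB, h⟩

theorem ae_exists_pos_frequently_le_neg_mul_of_subadditive [IsFiniteMeasure μ]
    {c : ℕ → X → ℝ} {L δ : ℝ} (hT : MeasurePreserving T μ μ) (hB : MeasurableSet B)
    (hsub : ∀ x n k, c (n + k) x ≤ c n (T^[k] x) + c k x)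
    (hbound : ∀ n x, c n x ≤ L) (hδ : 0 < δ) (hcB : ∀ x ∈ B, c 1 x ≤ -L - δ) :
    ∀ᵐ x ∂μ, x ∈ B → ∃ ε : ℝ, 0 < ε ∧ ∃ᶠ n in atTop, c n x ≤ -ε * n := by
  filter_upwards [ae_exists_pos_frequently_mul_le_visitCount hT hB] with x hx hxB
  obtain ⟨r, hr, hvisits⟩ := hx hxB
  refine ⟨δ * r / 2, by positivity,
    frequently_le_neg_mul_of_le_sub_mul (L := L) hδ hr (fun n => ?_) hvisits⟩
  linarith [add_mul_visitCount_le_of_subadditive hsub hbound hcB n x]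

end Recurrence

theorem stmt11_general {X : Type*} [MetricSpace X]
    [MeasurableSpace X] [BorelSpace X]
    (f : X ≃ₜ X) (μ : Measure X) [IsProbabilityMeasure μ]
    (hμ : MeasurePreserving f μ μ)
    (a : ℕ → X → ℝ) (ha : ∀ n, Continuous (a n)) (ha0 : ∀ x : X, a 0 x = 0)
    (hsub : ∀ (x : X) (n k : ℕ), a (n + k) x ≤ a n ((⇑f)^[k] x) + a k x)
    (S : ℕ) (hS : 1 ≤ S) (lam : ℝ) (hlam : 1 ≤ lam)
    (hup : ∀ (x : X) (k : ℕ), 1 ≤ k → a (k * S) x ≤ Real.log lam) :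
    ∀ᵐ x ∂μ, x ∈ {y : X | a S y < -Real.log lam} →
      liminf (fun n : ℕ => ((1 / (n : ℝ) * a n x : ℝ) : EReal)) atTop < 0 := by
  set L := Real.log lam
  have hbound : ∀ n x, a (n * S) x ≤ L := fun n x => n.eq_zero_or_pos.elim
    (fun hn => by simpa [hn, ha0] using Real.log_nonneg hlam) (hup x n)
  let B : ℕ → Set X := fun m => {y | a S y ≤ -L - 1 / (m + 1)}
  have hdecay : ∀ m, ∀ᵐ x ∂μ, x ∈ B m → ∃ ε : ℝ, 0 < ε ∧ ∃ᶠ N in atTop, a (N * S) x ≤ -ε * N :=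
    fun m => ae_exists_pos_frequently_le_neg_mul_of_subadditive (δ := 1 / (m + 1)) (hμ.iterate S)
      (isClosed_le (ha S) continuous_const).measurableSet (subadditive_comp_mul hsub S) hbound
      (by positivity) fun y hy => by rw [one_mul]; exact hy
  filter_upwards [ae_all_iff.mpr hdecay] with x hx hxA
  obtain ⟨m, hm⟩ := exists_nat_one_div_lt (show 0 < -L - a S x by linarith [hxA])
  obtain ⟨ε, hε, hfreq⟩ := hx m (show a S x ≤ _ by linarith)
  exact liminf_one_div_mul_lt_zero_of_frequently_le_neg_mul hS hε hfreq

/-- for a homeomorphism of a compact metric space preserving a Borel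
probability measure `μ` (not assumed ergodic) and a subadditive sequence of continuous
functions satisfying the generalized domination bound `a_{kS} ≤ log λ` everywhere, almost
every point of the set `A = {a_S < -log λ}` has negative lower growth rate. -/
theorem stmt11 {X : Type*} [MetricSpace X] [CompactSpace X]
    [MeasurableSpace X] [BorelSpace X]
    (f : X ≃ₜ X) (μ : Measure X) [IsProbabilityMeasure μ]
    (hμ : MeasurePreserving f μ μ)
    (a : ℕ → X → ℝ) (ha : ∀ n, Continuous (a n)) (ha0 : ∀ x : X, a 0 x = 0)
    (hsub : ∀ (x : X) (n k : ℕ), a (n + k) x ≤ a n ((⇑f)^[k] x) + a k x)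
    (S : ℕ) (hS : 1 ≤ S) (lam : ℝ) (hlam : 1 ≤ lam)
    (hup : ∀ (x : X) (k : ℕ), 1 ≤ k → a (k * S) x ≤ Real.log lam) :
    ∀ᵐ x ∂μ, x ∈ {y : X | a S y < -Real.log lam} →
      liminf (fun n : ℕ => ((1 / (n : ℝ) * a n x : ℝ) : EReal)) atTop < 0 :=
  stmt11_general f μ hμ a ha ha0 hsub S hS lam hlam hup
end
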